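/- Let T be a plane full binary tree on leaf set {1, …, n} (ordered left to right) and let ℓ ∈ {1, …, n}. Then the set {1, …, ℓ} can be written as a union of at most 1 + h_ℓ sets of the form des(v) with v a vertex of T, where h_ℓ is the height of the leaf ℓ. -/

import Mathlib

open TensorProduct PiTensorProduct

namespace TNS

/-- A full binary rooted tree with leaves labelled by `L` (together with a choice of
left and right child at every node, i.e. a plane structure, which is irrelevant for
the combinatorics of descendant leaf sets). -/
inductive BTree (L : Type*) : Type _ where
  | leaf : L → BTree L
  | node : BTree L → BTree L → BTree L

namespace BTree

variable {L : Type*}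

/-- The list of leaf labels, from left to right. -/
def leafList : BTree L → List L
  | .leaf l => [l]
  | .node lt rt => lt.leafList ++ rt.leafList

/-- The set of leaf labels. -/
def leafSet (t : BTree L) : Set L := {l | l ∈ t.leafList}

/-- The subtree at a position (a path of left (`false`) / right (`true`) steps from
the root), if the position is a vertex of the tree. -/
def subtreeAt : BTree L → List Bool → Option (BTree L)
  | t, [] => some t
  | .leaf _, _ :: _ => none
  | .node lt _, false :: p => lt.subtreeAt p
  | .node _ rt, true :: p => rt.subtreeAt p

/-- `p` is a vertex of `t`; vertices are encoded by their 0/1-path from the root.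
In the descendant order, `p` is a descendant of `q` iff `q` is a prefix of `p`
(`q <+: p`). -/
def IsVertex (t : BTree L) (p : List Bool) : Prop := (t.subtreeAt p).isSome

/-- `des t p`: the set of leaves descending from the vertex `p`. -/
def des (t : BTree L) (p : List Bool) : Set L :=
  match t.subtreeAt p with
  | some s => s.leafSet
  | none => ∅

/-- `anti t p`: the complement of `des t p` in the leaf set. -/
def anti (t : BTree L) (p : List Bool) : Set L := t.leafSet \ t.des p

/-- A doad set: a set of leaves of the form `des v` or `anti v` for a vertex `v`. -/
def IsDoad (t : BTree L) (S : Set L) : Prop :=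
  ∃ p, t.IsVertex p ∧ (S = t.des p ∨ S = t.anti p)

/-- `t` is a tree on the leaf set `L`: its leaves are pairwise distinct and exhaust `L`. -/
def IsTreeOn (t : BTree L) : Prop := t.leafList.Nodup ∧ ∀ l : L, l ∈ t.leafList

/-- `S` is a union of at most `m` doad sets of `t`. -/
def IsUnionOfAtMostDoads (t : BTree L) (m : ℕ) (S : Set L) : Prop :=
  ∃ (k : ℕ) (F : Fin k → Set L), k ≤ m ∧ (∀ i, t.IsDoad (F i)) ∧ (⋃ i, F i) = S

end BTree

namespace BTree

variable {L : Type*}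

/-- Relabelling of the leaves of a tree. -/
def map {L' : Type*} (f : L → L') : BTree L → BTree L'
  | .leaf l => .leaf (f l)
  | .node lt rt => .node (lt.map f) (rt.map f)

/-- The height of a 0/1-path: the number of 1s occurring before the final 0
(and 0 if the path contains no 0). -/
def heightOfPath (p : List Bool) : ℕ := (p.reverse.dropWhile (fun b => b)).count true

/-- The dual height of a 0/1-path: the number of 0s occurring before the final 1
(and 0 if the path contains no 1). -/
def dualHeightOfPath (p : List Bool) : ℕ := (p.reverse.dropWhile (fun b => !b)).count false

/-- The 0/1-path from the root to the leaf labelled `l`, if it exists. -/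
def findLeaf [DecidableEq L] : BTree L → L → Option (List Bool)
  | .leaf l', l => if l = l' then some [] else none
  | .node lt rt, l =>
    match lt.findLeaf l with
    | some p => some (false :: p)
    | none => (rt.findLeaf l).map (fun p => true :: p)

/-- The height `h_l` of the leaf labelled `l`. -/
def leafHeight [DecidableEq L] (t : BTree L) (l : L) : ℕ :=
  heightOfPath ((t.findLeaf l).getD [])

/-- The dual height `h*_l` of the leaf labelled `l`. -/
def dualLeafHeight [DecidableEq L] (t : BTree L) (l : L) : ℕ :=
  dualHeightOfPath ((t.findLeaf l).getD [])

/-- `t` is a plane tree whose `n` leaves, ordered from left to right, are identified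
with `0, …, n-1` (a model of the leaf set `{1, …, n}`). -/
def IsPlaneOn {n : ℕ} (t : BTree (Fin n)) : Prop := t.leafList = List.finRange n

/-- The train track tree on `n + 1` leaves: every node has a leaf as right child,
and the left child of each node has at least as many leaf descendants as the right
child. Its leaves, from left to right, are `0, …, n`. -/
def TT : (n : ℕ) → BTree (Fin (n + 1))
  | 0 => .leaf 0
  | n + 1 => .node ((TT n).map Fin.castSucc) (.leaf (Fin.last (n + 1)))

end BTree

/-- `S` is a union of at most `m` descendant-leaf sets of `t`. -/
def BTree.IsUnionOfAtMostDes {L : Type*} (t : BTree L) (m : ℕ) (S : Set L) : Prop :=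
  ∃ (k : ℕ) (F : Fin k → Set L), k ≤ m ∧ (∀ i, ∃ p, t.IsVertex p ∧ F i = t.des p) ∧
    (⋃ i, F i) = S

namespace BTree
variable {L : Type*} [DecidableEq L]

lemma des_nil (t : BTree L) : t.des [] = t.leafSet := by cases t <;> rfl

lemma isVertex_nil (t : BTree L) : t.IsVertex [] := by cases t <;> exact rfl

lemma isVertex_false_cons {lt rt : BTree L} {q : List Bool} (h : lt.IsVertex q) :
    (BTree.node lt rt).IsVertex (false :: q) := h

lemma isVertex_true_cons {lt rt : BTree L} {q : List Bool} (h : rt.IsVertex q) :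
    (BTree.node lt rt).IsVertex (true :: q) := h

lemma des_false_cons (lt rt : BTree L) (q : List Bool) :
    (BTree.node lt rt).des (false :: q) = lt.des q := rfl

lemma des_true_cons (lt rt : BTree L) (q : List Bool) :
    (BTree.node lt rt).des (true :: q) = rt.des q := rfl

lemma aux_count_false (xs : List Bool) :
    ((xs ++ [false]).dropWhile (fun b => b)).count true
      = (xs.dropWhile (fun b => b)).count true := by
  induction xs with
  | nil => simp
  | cons a xs ih =>
    cases a <;> simp [List.dropWhile_cons, ih, List.count_append, List.count_cons]

lemma aux_count_true (xs : List Bool) (h : false ∈ xs) :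
    ((xs ++ [true]).dropWhile (fun b => b)).count true
      = (xs.dropWhile (fun b => b)).count true + 1 := by
  induction xs with
  | nil => simp at h
  | cons a xs ih =>
    cases a
    · simp [List.dropWhile_cons, List.count_append, List.count_cons]
    · have h' : false ∈ xs := by simpa using h
      simp [List.dropWhile_cons, ih h']

lemma height_false_cons (p : List Bool) :
    heightOfPath (false :: p) = heightOfPath p := by
  unfold heightOfPath
  rw [List.reverse_cons]
  exact aux_count_false p.reverse

lemma height_true_cons (p : List Bool) (h : false ∈ p) :
    heightOfPath (true :: p) = heightOfPath p + 1 := by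
  unfold heightOfPath
  rw [List.reverse_cons]
  exact aux_count_true p.reverse (by simpa using h)

lemma mem_of_findLeaf : ∀ (t : BTree L) (l : L) (p : List Bool),
    t.findLeaf l = some p → l ∈ t.leafList := by
  intro t
  induction t with
  | leaf l' =>
    intro l p h
    unfold findLeaf at h
    split at h
    · simp [leafList]; assumption
    · exact absurd h (by simp)
  | node lt rt ihl ihr =>
    intro l p h
    cases h1 : lt.findLeaf l with
    | some q => exact List.mem_append.2 (Or.inl (ihl l q h1))
    | none =>
      rw [findLeaf, h1] at h
      cases h2 : rt.findLeaf l with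
      | some q => exact List.mem_append.2 (Or.inr (ihr l q h2))
      | none => rw [h2] at h; exact absurd h (by simp)

lemma isSome_findLeaf : ∀ (t : BTree L) (l : L), l ∈ t.leafList → (t.findLeaf l).isSome := by
  intro t
  induction t with
  | leaf l' =>
    intro l h
    have : l = l' := by simpa [leafList] using h
    simp [findLeaf, this]
  | node lt rt ihl ihr =>
    intro l h
    rcases List.mem_append.1 h with h | h
    · have := ihl l h
      rw [Option.isSome_iff_exists] at this
      obtain ⟨q, hq⟩ := this
      simp [findLeaf, hq]
    · have := ihr l h
      rw [Option.isSome_iff_exists] at this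
      obtain ⟨q, hq⟩ := this
      cases h1 : lt.findLeaf l <;> simp [findLeaf, h1, hq]

lemma last_of_allTrue : ∀ (t : BTree L) (l : L) (p : List Bool),
    t.findLeaf l = some p → false ∉ p →
    t.leafList.idxOf l + 1 = t.leafList.length := by
  intro t
  induction t with
  | leaf l' =>
    intro l p h _
    unfold findLeaf at h
    split at h
    · subst ‹l = l'›; simp [leafList]
    · exact absurd h (by simp)
  | node lt rt ihl ihr =>
    intro l p h hall
    cases h1 : lt.findLeaf l with
    | some q =>
      rw [findLeaf, h1] at h
      have : p = false :: q := by simpa using h.symm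
      rw [this] at hall
      simp at hall
    | none =>
      rw [findLeaf, h1] at h
      cases h2 : rt.findLeaf l with
      | some q =>
        rw [h2] at h
        have hp : p = true :: q := by simpa using h.symm
        have hq : false ∉ q := fun hm => hall (by rw [hp]; exact List.mem_cons_of_mem _ hm)
        have hnl : l ∉ lt.leafList := fun hm => by
          simpa [h1] using isSome_findLeaf lt l hm
        have := ihr l q h2 hq
        show (lt.leafList ++ rt.leafList).idxOf l + 1 = (lt.leafList ++ rt.leafList).length
        rw [List.idxOf_append_of_notMem hnl, List.length_append]
        omega
      | none => rw [h2] at h; exact absurd h (by simp)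

lemma iUnion_cons {α : Type*} {k : ℕ} (A : Set α) (F : Fin k → Set α) :
    (⋃ i, Fin.cons (α := fun _ => Set α) A F i) = A ∪ ⋃ j, F j := by
  ext x
  simp only [Set.mem_iUnion, Set.mem_union, Fin.exists_fin_succ, Fin.cons_zero, Fin.cons_succ]

lemma cover : ∀ (t : BTree L) (l : L) (p : List Bool), t.findLeaf l = some p →
    ∃ (k : ℕ) (F : Fin k → Set L), k ≤ 1 + heightOfPath p ∧
      (∀ i, ∃ q, t.IsVertex q ∧ F i = t.des q) ∧
      (⋃ i, F i) = {x | x ∈ t.leafList.take (t.leafList.idxOf l + 1)} := by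
  intro t
  induction t with
  | leaf l' =>
    intro l p h
    unfold findLeaf at h
    split at h
    case isTrue heq =>
      refine ⟨1, fun _ => (BTree.leaf l').leafSet, le_refl 1 |>.trans (by
        have : (0:ℕ) ≤ heightOfPath p := Nat.zero_le _
        omega), fun i => ⟨[], isVertex_nil _, (des_nil _).symm⟩, ?_⟩
      rw [Set.iUnion_const]
      subst heq
      ext x
      simp [leafSet, leafList, List.idxOf_cons_self]
    case isFalse => exact absurd h (by simp)
  | node lt rt ihl ihr =>
    intro l p h
    cases h1 : lt.findLeaf l with
    | some q =>
      rw [findLeaf, h1] at h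
      have hp : p = false :: q := by simpa using h.symm
      obtain ⟨k, F, hk, hF, hU⟩ := ihl l q h1
      have hmem : l ∈ lt.leafList := mem_of_findLeaf lt l q h1
      refine ⟨k, F, ?_, ?_, ?_⟩
      · rw [hp, height_false_cons]; exact hk
      · intro i
        obtain ⟨r, hr, hFr⟩ := hF i
        exact ⟨false :: r, isVertex_false_cons hr, by rw [hFr, des_false_cons]⟩
      · rw [hU]
        have h2 : (lt.leafList ++ rt.leafList).idxOf l = lt.leafList.idxOf l :=
          List.idxOf_append_of_mem hmem
        have h3 : (lt.leafList ++ rt.leafList).take (lt.leafList.idxOf l + 1)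
            = lt.leafList.take (lt.leafList.idxOf l + 1) :=
          List.take_append_of_le_length (by
            have := List.idxOf_lt_length_iff.2 hmem; omega)
        show _ = {x | x ∈ ((BTree.node lt rt).leafList).take _}
        rw [show (BTree.node lt rt).leafList = lt.leafList ++ rt.leafList from rfl, h2, h3]
    | none =>
      rw [findLeaf, h1] at h
      cases h2 : rt.findLeaf l with
      | none => rw [h2] at h; exact absurd h (by simp)
      | some q =>
        rw [h2] at h
        have hp : p = true :: q := by simpa using h.symm
        have hnl : l ∉ lt.leafList := fun hm => by
          simpa [h1] using isSome_findLeaf lt l hm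
        have hidx : (lt.leafList ++ rt.leafList).idxOf l
            = lt.leafList.length + rt.leafList.idxOf l :=
          List.idxOf_append_of_notMem hnl
        by_cases hf : false ∈ q
        · obtain ⟨k, F, hk, hF, hU⟩ := ihr l q h2
          refine ⟨k + 1, Fin.cons (α := fun _ => Set L) ((BTree.node lt rt).des [false]) F, ?_, ?_, ?_⟩
          · rw [hp, height_true_cons q hf]; omega
          · intro i
            refine Fin.cases ?_ ?_ i
            · exact ⟨[false], by simp [IsVertex, subtreeAt], by simp⟩
            · intro j
              obtain ⟨r, hr, hFr⟩ := hF j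
              exact ⟨true :: r, isVertex_true_cons hr, by
                rw [Fin.cons_succ, hFr, des_true_cons]⟩
          · rw [BTree.iUnion_cons, hU]
            have hA : (BTree.node lt rt).des [false] = lt.leafSet := by cases lt <;> rfl
            have htake : ((lt.leafList ++ rt.leafList).take
                ((lt.leafList ++ rt.leafList).idxOf l + 1))
                = lt.leafList ++ rt.leafList.take (rt.leafList.idxOf l + 1) := by
              rw [hidx, Nat.add_assoc, List.take_append]
              simp [List.take_of_length_le]
            show _ = {x | x ∈ ((BTree.node lt rt).leafList).take _}
            rw [show (BTree.node lt rt).leafList = lt.leafList ++ rt.leafList from rfl, htake]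
            ext x
            simp [hA, leafSet, List.mem_append]
        · have hall : false ∉ p := by
            rw [hp]
            intro hm
            rcases List.mem_cons.1 hm with h' | h'
            · exact Bool.noConfusion h'
            · exact hf h'
          have hlast := last_of_allTrue (BTree.node lt rt) l p
            (by rw [findLeaf, h1, h2]; simpa using hp.symm) hall
          refine ⟨1, fun _ => (BTree.node lt rt).leafSet, by
            have : (0:ℕ) ≤ heightOfPath p := Nat.zero_le _
            omega, fun i => ⟨[], isVertex_nil _, (des_nil _).symm⟩, ?_⟩
          rw [Set.iUnion_const, hlast, List.take_of_length_le (le_refl _)]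
          rfl

end BTree

/-- For a plane tree on the ordered leaf set `{1, …, n}` (modelled by `Fin n`) and a
leaf `l`, the initial segment of leaves up to `l` can be covered by at most
`1 + h_l` descendant-leaf sets, where `h_l` is the height of the leaf `l`. -/
theorem statement14 {n : ℕ} (t : BTree (Fin n)) (ht : t.IsPlaneOn) (l : Fin n) :
    t.IsUnionOfAtMostDes (1 + t.leafHeight l) (Set.Iic l) := by
  have hl : l ∈ t.leafList := by rw [ht]; exact List.mem_finRange l
  obtain ⟨p, hp⟩ := Option.isSome_iff_exists.mp (BTree.isSome_findLeaf t l hl)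
  obtain ⟨k, F, hk, hF, hU⟩ := BTree.cover t l p hp
  refine ⟨k, F, ?_, hF, ?_⟩
  · have : t.leafHeight l = BTree.heightOfPath p := by
      rw [BTree.leafHeight, hp]; rfl
    rw [this]; exact hk
  · rw [hU, ht, List.idxOf_finRange]
    ext x
    simp only [Set.mem_setOf_eq, Set.mem_Iic]
    rw [List.mem_take_iff_getElem]
    constructor
    · rintro ⟨i, hi, hx⟩
      rw [List.getElem_finRange] at hx
      have hxv : x.val = i := by rw [← hx]; simp
      simp only [lt_min_iff, List.length_finRange] at hi
      rw [Fin.le_def]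
      omega
    · intro hx
      refine ⟨x.val, ?_, ?_⟩
      · simp only [lt_min_iff, List.length_finRange]
        exact ⟨by omega, x.isLt⟩
      · simp [List.getElem_finRange]

end TNS
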